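/- Frame rule for parallel composition: if P is independent of φ (P does not satisfy ◇[φ] under the isomorphism semantics) and Q satisfies [φ], then for every formula ψ, P satisfies ψ if and only if the parallel composition P ∥ Q satisfies ψ ∗ [φ] (all under the isomorphism semantics). -/

import Mathlib

/-- A poset with boxes over an alphabet `A`. -/
structure PB (A : Type) : Type 1 where
  Ev : Type
  le : Ev → Ev → Prop
  le_refl : ∀ e, le e e
  le_trans : ∀ e f g, le e f → le f g → le e g
  le_antisymm : ∀ e f, le e f → le f e → e = f
  lab : Ev → A
  boxes : Set (Set Ev)
  boxes_ne : ∀ B ∈ boxes, B.Nonempty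

/-- A homomorphism of posets with boxes: a bijection preserving labels,
order and boxes. -/
structure Hom {A : Type} (P Q : PB A) where
  toFun : P.Ev → Q.Ev
  bij : Function.Bijective toFun
  lab_eq : ∀ e, Q.lab (toFun e) = P.lab e
  mono : ∀ e f, P.le e f → Q.le (toFun e) (toFun f)
  box_pres : ∀ B ∈ P.boxes, toFun '' B ∈ Q.boxes

/-- Order-reflecting homomorphism. -/
def Hom.OrdRefl {A : Type} {P Q : PB A} (φ : Hom P Q) : Prop :=
  ∀ e f, Q.le (φ.toFun e) (φ.toFun f) → P.le e f

/-- Box-reflecting homomorphism. -/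
def Hom.BoxRefl {A : Type} {P Q : PB A} (φ : Hom P Q) : Prop :=
  ∀ B : Set P.Ev, φ.toFun '' B ∈ Q.boxes → B ∈ P.boxes

/-- Isomorphism of posets with boxes. -/
def Iso {A : Type} (P Q : PB A) : Prop :=
  ∃ φ : Hom P Q, φ.OrdRefl ∧ φ.BoxRefl

/-- `Subsume P Q` means `P ⊑ Q` : there is a homomorphism from `Q` to `P`. -/
def Subsume {A : Type} (P Q : PB A) : Prop := Nonempty (Hom Q P)

/-- The empty poset with boxes. -/
def onePB (A : Type) : PB A where
  Ev := PEmpty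
  le := fun _ _ => True
  le_refl := fun e => trivial
  le_trans := fun _ _ _ _ _ => trivial
  le_antisymm := fun e => e.elim
  lab := fun e => e.elim
  boxes := ∅
  boxes_ne := fun _ h => absurd h (Set.notMem_empty _)

/-- The atomic poset with boxes, with a single event labelled `a`. -/
def atomPB {A : Type} (a : A) : PB A where
  Ev := PUnit
  le := fun _ _ => True
  le_refl := fun _ => trivial
  le_trans := fun _ _ _ _ _ => trivial
  le_antisymm := fun _ _ _ _ => rfl
  lab := fun _ => a
  boxes := ∅
  boxes_ne := fun _ h => absurd h (Set.notMem_empty _)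

/-- The order of a sequential composition on the disjoint union of events. -/
def seqLE {A : Type} (P Q : PB A) : P.Ev ⊕ Q.Ev → P.Ev ⊕ Q.Ev → Prop
  | .inl a, .inl b => P.le a b
  | .inr a, .inr b => Q.le a b
  | .inl _, .inr _ => True
  | .inr _, .inl _ => False

/-- Sequential composition of posets with boxes. -/
def seqPB {A : Type} (P Q : PB A) : PB A where
  Ev := P.Ev ⊕ Q.Ev
  le := seqLE P Q
  le_refl := fun e => by cases e <;> simp [seqLE, PB.le_refl]
  le_trans := fun e f g hef hfg => by
    cases e <;> cases f <;> cases g <;>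
      simp_all [seqLE] <;>
      first
        | exact P.le_trans _ _ _ hef hfg
        | exact Q.le_trans _ _ _ hef hfg
  le_antisymm := fun e f hef hfe => by
    cases e <;> cases f <;> simp_all [seqLE]
    · exact P.le_antisymm _ _ hef hfe
    · exact Q.le_antisymm _ _ hef hfe
  lab := Sum.elim P.lab Q.lab
  boxes := (Set.image Sum.inl '' P.boxes) ∪ (Set.image Sum.inr '' Q.boxes)
  boxes_ne := by
    rintro B (⟨C, hC, rfl⟩ | ⟨C, hC, rfl⟩)
    · exact ((P.boxes_ne C hC).image _)
    · exact ((Q.boxes_ne C hC).image _)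

/-- The order of a parallel composition on the disjoint union of events. -/
def parLE {A : Type} (P Q : PB A) : P.Ev ⊕ Q.Ev → P.Ev ⊕ Q.Ev → Prop
  | .inl a, .inl b => P.le a b
  | .inr a, .inr b => Q.le a b
  | .inl _, .inr _ => False
  | .inr _, .inl _ => False

/-- Parallel composition of posets with boxes. -/
def parPB {A : Type} (P Q : PB A) : PB A where
  Ev := P.Ev ⊕ Q.Ev
  le := parLE P Q
  le_refl := fun e => by cases e <;> simp [parLE, PB.le_refl]
  le_trans := fun e f g hef hfg => by
    cases e <;> cases f <;> cases g <;>
      simp_all [parLE] <;>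
      first
        | exact P.le_trans _ _ _ hef hfg
        | exact Q.le_trans _ _ _ hef hfg
  le_antisymm := fun e f hef hfe => by
    cases e <;> cases f <;> simp_all [parLE]
    · exact P.le_antisymm _ _ hef hfe
    · exact Q.le_antisymm _ _ hef hfe
  lab := Sum.elim P.lab Q.lab
  boxes := (Set.image Sum.inl '' P.boxes) ∪ (Set.image Sum.inr '' Q.boxes)
  boxes_ne := by
    rintro B (⟨C, hC, rfl⟩ | ⟨C, hC, rfl⟩)
    · exact ((P.boxes_ne C hC).image _)
    · exact ((Q.boxes_ne C hC).image _)

/-- Boxing: add the full (nonempty) set of events as a box. -/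
def boxPB {A : Type} (P : PB A) : PB A where
  Ev := P.Ev
  le := P.le
  le_refl := P.le_refl
  le_trans := P.le_trans
  le_antisymm := P.le_antisymm
  lab := P.lab
  boxes := P.boxes ∪ {B | B = Set.univ ∧ B.Nonempty}
  boxes_ne := by
    rintro B (hB | ⟨rfl, hne⟩)
    · exact P.boxes_ne B hB
    · exact hne

/-- Restriction of a poset with boxes to a subset of its events. -/
def restrictPB {A : Type} (P : PB A) (S : Set P.Ev) : PB A where
  Ev := S
  le := fun x y => P.le x.1 y.1
  le_refl := fun x => P.le_refl x.1
  le_trans := fun x y z => P.le_trans x.1 y.1 z.1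
  le_antisymm := fun x y h h' => Subtype.ext (P.le_antisymm _ _ h h')
  lab := fun x => P.lab x.1
  boxes := {B | Subtype.val '' B ∈ P.boxes}
  boxes_ne := fun B hB => by
    rcases P.boxes_ne _ hB with ⟨x, ⟨y, hy, rfl⟩⟩
    exact ⟨y, hy⟩

/-- Forbidden pattern P1 (the `N` pattern). -/
def hasP1 {A : Type} (P : PB A) : Prop :=
  ∃ e1 e2 e3 e4 : P.Ev,
    P.le e1 e3 ∧ P.le e2 e3 ∧ P.le e2 e4 ∧
    ¬ P.le e1 e4 ∧ ¬ P.le e2 e1 ∧ ¬ P.le e4 e3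

/-- Forbidden pattern P2 (overlapping non-nested boxes). -/
def hasP2 {A : Type} (P : PB A) : Prop :=
  ∃ (Bx Cx : Set P.Ev) (e1 e2 e3 : P.Ev),
    Bx ∈ P.boxes ∧ Cx ∈ P.boxes ∧
    e1 ∈ Bx \ Cx ∧ e2 ∈ Bx ∩ Cx ∧ e3 ∈ Cx \ Bx

/-- Forbidden pattern P3. -/
def hasP3 {A : Type} (P : PB A) : Prop :=
  ∃ (Bx : Set P.Ev) (e1 e2 e3 : P.Ev),
    Bx ∈ P.boxes ∧ e1 ∉ Bx ∧ e2 ∈ Bx ∧ e3 ∈ Bx ∧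
    P.le e1 e2 ∧ ¬ P.le e1 e3

/-- Forbidden pattern P4. -/
def hasP4 {A : Type} (P : PB A) : Prop :=
  ∃ (Bx : Set P.Ev) (e1 e2 e3 : P.Ev),
    Bx ∈ P.boxes ∧ e1 ∉ Bx ∧ e2 ∈ Bx ∧ e3 ∈ Bx ∧
    P.le e2 e1 ∧ ¬ P.le e3 e1

/-- A set of events is non-trivial if it is neither empty nor everything. -/
def NonTrivial {A : Type} (P : PB A) (S : Set P.Ev) : Prop :=
  S ≠ ∅ ∧ S ≠ Set.univ

/-- A set of events is nested if every box is contained in it or disjoint from it. -/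
def Nested {A : Type} (P : PB A) (S : Set P.Ev) : Prop :=
  ∀ B ∈ P.boxes, B ⊆ S ∨ B ∩ S = ∅

/-- A set of events is prefix if every event in it is below every event outside. -/
def IsPrefix {A : Type} (P : PB A) (S : Set P.Ev) : Prop :=
  ∀ e ∈ S, ∀ f ∉ S, P.le e f

/-- A set of events is isolated if its events are incomparable with outside events. -/
def Isolated {A : Type} (P : PB A) (S : Set P.Ev) : Prop :=
  ∀ e ∈ S, ∀ f ∉ S, ¬ P.le e f ∧ ¬ P.le f e
/-- Series–parallel terms. -/
inductive Term (A : Type) : Type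
  | one : Term A
  | atom (a : A) : Term A
  | seq (s t : Term A) : Term A
  | par (s t : Term A) : Term A
  | box (s : Term A) : Term A

/-- Interpretation of terms as posets with boxes. -/
def semT {A : Type} : Term A → PB A
  | .one => onePB A
  | .atom a => atomPB a
  | .seq s t => seqPB (semT s) (semT t)
  | .par s t => parPB (semT s) (semT t)
  | .box s => boxPB (semT s)

/-- Derivability in the equational theory of bimonoids with boxes. -/
inductive BimEq {A : Type} : Term A → Term A → Prop
  | seq_assoc (s t u : Term A) : BimEq (.seq s (.seq t u)) (.seq (.seq s t) u)
  | par_assoc (s t u : Term A) : BimEq (.par s (.par t u)) (.par (.par s t) u)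
  | par_comm (s t : Term A) : BimEq (.par s t) (.par t s)
  | seq_unit_l (s : Term A) : BimEq (.seq .one s) s
  | seq_unit_r (s : Term A) : BimEq (.seq s .one) s
  | par_unit (s : Term A) : BimEq (.par .one s) s
  | box_box (s : Term A) : BimEq (.box (.box s)) (.box s)
  | box_one : BimEq (.box .one) .one
  | refl (s : Term A) : BimEq s s
  | symm {s t : Term A} : BimEq s t → BimEq t s
  | trans {s t u : Term A} : BimEq s t → BimEq t u → BimEq s u
  | seq_congr {s s' t t' : Term A} : BimEq s s' → BimEq t t' → BimEq (.seq s t) (.seq s' t')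
  | par_congr {s s' t t' : Term A} : BimEq s s' → BimEq t t' → BimEq (.par s t) (.par s' t')
  | box_congr {s s' : Term A} : BimEq s s' → BimEq (.box s) (.box s')

/-- Derivability in the inequational theory of concurrent monoids with boxes:
bimonoid axioms (in both directions) together with exchange and box elimination. -/
inductive CMLe {A : Type} : Term A → Term A → Prop
  | of_eq {s t : Term A} : BimEq s t → CMLe s t
  | exchange (s t u v : Term A) :
      CMLe (.seq (.par s t) (.par u v)) (.par (.seq s u) (.seq t v))
  | box_le (s : Term A) : CMLe (.box s) s
  | refl (s : Term A) : CMLe s s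
  | trans {s t u : Term A} : CMLe s t → CMLe t u → CMLe s u
  | seq_congr {s s' t t' : Term A} : CMLe s s' → CMLe t t' → CMLe (.seq s t) (.seq s' t')
  | par_congr {s s' t t' : Term A} : CMLe s s' → CMLe t t' → CMLe (.par s t) (.par s' t')
  | box_congr {s s' : Term A} : CMLe s s' → CMLe (.box s) (.box s')
/-- Formulas of pomset logic. -/
inductive Formula (A : Type) : Type
  | emp : Formula A
  | atom (a : A) : Formula A
  | or (φ ψ : Formula A) : Formula A
  | and (φ ψ : Formula A) : Formula A
  | seqF (φ ψ : Formula A) : Formula A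
  | parF (φ ψ : Formula A) : Formula A
  | boxF (φ : Formula A) : Formula A
  | dia (φ : Formula A) : Formula A
  | neg (φ : Formula A) : Formula A

/-- `Q` is a sub-poset of `P` : it is isomorphic to a restriction of `P`. -/
def SubPoset {A : Type} (Q P : PB A) : Prop :=
  ∃ S : Set P.Ev, Iso Q (restrictPB P S)

/-- Satisfaction relation, parametrized by a relation `R` on posets with boxes. -/
def sat {A : Type} (R : PB A → PB A → Prop) : Formula A → PB A → Prop
  | .emp, P => R P (onePB A)
  | .atom a, P => R P (atomPB a)
  | .or φ ψ, P => sat R φ P ∨ sat R ψ P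
  | .and φ ψ, P => sat R φ P ∧ sat R ψ P
  | .seqF φ ψ, P => ∃ P1 P2, R P (seqPB P1 P2) ∧ sat R φ P1 ∧ sat R ψ P2
  | .parF φ ψ, P => ∃ P1 P2, R P (parPB P1 P2) ∧ sat R φ P1 ∧ sat R ψ P2
  | .boxF φ, P => ∃ Q, R P (boxPB Q) ∧ sat R φ Q
  | .dia φ, P => ∃ P' Q, R P P' ∧ SubPoset Q P' ∧ sat R φ Q
  | .neg φ, P => ¬ sat R φ P

/-- The formula associated with a series–parallel term. -/
def formOf {A : Type} : Term A → Formula A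
  | .one => .emp
  | .atom a => .atom a
  | .seq s t => .seqF (formOf s) (formOf t)
  | .par s t => .parF (formOf s) (formOf t)
  | .box s => .boxF (formOf s)
/-!
Satisfaction is invariant under isomorphism, so it suffices to show that an isomorphism
`P ∥ Q ≅ P₁ ∥ P₂` with `P₂ ⊨ [φ]` restricts to `P ≅ P₁`. Independence rules out `∅ ⊨ φ`, so
`P₂` and `Q` are nonempty and each is spanned by a box. The preimage of the box spanning `P₂`
is a box of `P ∥ Q`, hence lies in `P` or in `Q`. In `P` it would exhibit `[φ]` as a sub-poset
of `P`, contradicting independence. In `Q`, the box spanning `Q` is mapped onto a box meeting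
`P₂`, hence onto `P₂`, and the complements `P` and `P₁` correspond.
-/

section FrameRule

variable {A : Type}

theorem Iso.of_equiv {X Y : PB A} (e : X.Ev ≃ Y.Ev) (hlab : ∀ x, Y.lab (e x) = X.lab x)
    (hle : ∀ x y, Y.le (e x) (e y) ↔ X.le x y) (hbox : ∀ C, e '' C ∈ Y.boxes ↔ C ∈ X.boxes) :
    Iso X Y :=
  ⟨⟨e, e.bijective, hlab, fun x y => (hle x y).2, fun C hC => (hbox C).2 hC⟩,
    fun x y => (hle x y).1, fun C hC => (hbox C).1 hC⟩

theorem Iso.exists_equiv {X Y : PB A} (h : Iso X Y) :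
    ∃ e : X.Ev ≃ Y.Ev, (∀ x, Y.lab (e x) = X.lab x) ∧ (∀ x y, Y.le (e x) (e y) ↔ X.le x y) ∧
      ∀ C, e '' C ∈ Y.boxes ↔ C ∈ X.boxes := by
  obtain ⟨f, hord, hbox⟩ := h
  exact ⟨Equiv.ofBijective f.toFun f.bij, f.lab_eq, fun x y => ⟨hord x y, f.mono x y⟩,
    fun C => ⟨hbox C, f.box_pres C⟩⟩

theorem Iso.refl (X : PB A) : Iso X X :=
  Iso.of_equiv (Equiv.refl _) (fun _ => rfl) (fun _ _ => Iff.rfl) (fun C => by simp)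

theorem Iso.symm {X Y : PB A} (h : Iso X Y) : Iso Y X := by
  obtain ⟨e, hlab, hle, hbox⟩ := h.exists_equiv
  refine Iso.of_equiv e.symm (fun y => ?_) (fun x y => ?_) (fun C => ?_)
  · simpa using (hlab (e.symm y)).symm
  · simpa using (hle (e.symm x) (e.symm y)).symm
  · simpa [e.image_symm_image] using (hbox (e.symm '' C)).symm

theorem Iso.trans {X Y Z : PB A} (h₁ : Iso X Y) (h₂ : Iso Y Z) : Iso X Z := by
  obtain ⟨e₁, hlab₁, hle₁, hbox₁⟩ := h₁.exists_equiv
  obtain ⟨e₂, hlab₂, hle₂, hbox₂⟩ := h₂.exists_equiv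
  refine Iso.of_equiv (e₁.trans e₂) (fun x => ?_) (fun x y => ?_) (fun C => ?_)
  · simp [hlab₁, hlab₂]
  · simp [hle₁, hle₂]
  · rw [Equiv.coe_trans, Set.image_comp, hbox₂, hbox₁]

theorem Iso.of_isEmpty {X Y : PB A} (hX : IsEmpty X.Ev) (hY : IsEmpty Y.Ev) : Iso X Y :=
  Iso.of_equiv (Equiv.equivOfIsEmpty _ _) isEmptyElim (fun x => isEmptyElim x)
    fun _ => iff_of_false (fun h => isEmptyElim (Y.boxes_ne _ h).some)
      (fun h => isEmptyElim (X.boxes_ne _ h).some)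

theorem sat_iff_of_iso {P P' : PB A} (h : Iso P P') (ψ : Formula A) :
    sat Iso ψ P ↔ sat Iso ψ P' := by
  have hcongr : ∀ R, Iso P R ↔ Iso P' R := fun R => ⟨h.symm.trans, h.trans⟩
  induction ψ with
  | or _ _ ih₁ ih₂ => exact or_congr ih₁ ih₂
  | and _ _ ih₁ ih₂ => exact and_congr ih₁ ih₂
  | neg _ ih => exact not_congr ih
  | _ => simp only [sat, hcongr]

theorem iso_restrictPB_of_range_eq {X Y : PB A} {S : Set Y.Ev} (g : X.Ev → Y.Ev)
    (hg : Function.Injective g) (hlab : ∀ x, Y.lab (g x) = X.lab x)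
    (hle : ∀ x y, Y.le (g x) (g y) ↔ X.le x y) (hbox : ∀ C, g '' C ∈ Y.boxes ↔ C ∈ X.boxes)
    (hS : Set.range g = S) :
    Iso X (restrictPB Y S) := by
  subst hS
  refine Iso.of_equiv (Equiv.ofInjective g hg : X.Ev ≃ (restrictPB Y (Set.range g)).Ev)
    hlab hle (fun C => ?_)
  show Subtype.val '' (Equiv.ofInjective g hg '' C) ∈ Y.boxes ↔ _
  rw [Set.image_image]
  exact hbox C

theorem Hom.iso_restrictPB_image {X Y : PB A} (f : Hom X Y) (hord : f.OrdRefl)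
    (hbox : f.BoxRefl) (S : Set X.Ev) :
    Iso (restrictPB X S) (restrictPB Y (f.toFun '' S)) := by
  refine iso_restrictPB_of_range_eq (X := restrictPB X S) _ (f.bij.1.comp Subtype.val_injective)
    (fun x => f.lab_eq x.1) (fun x y => ⟨hord x.1 y.1, f.mono x.1 y.1⟩) (fun C => ?_)
    (Set.image_eq_range f.toFun S).symm
  have hC : f.toFun '' (Subtype.val '' C) = (fun x : S => f.toFun x) '' C :=
    Set.image_image f.toFun Subtype.val C
  exact (congrArg (· ∈ Y.boxes) hC).to_iff.symm.trans ⟨hbox _, f.box_pres _⟩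

theorem image_inl_mem_parPB_boxes_iff {P Q : PB A} {C : Set P.Ev} :
    (Sum.inl : P.Ev → (parPB P Q).Ev) '' C ∈ (parPB P Q).boxes ↔ C ∈ P.boxes := by
  refine ⟨?_, fun hC => Or.inl ⟨C, hC, rfl⟩⟩
  rintro (⟨C', hC', hC'C⟩ | ⟨C', hC', hC'C⟩)
  · rwa [← Sum.inl_injective.image_injective hC'C]
  · obtain ⟨q, hq⟩ := Q.boxes_ne C' hC'
    have : Sum.inr q ∈ Sum.inl '' C := hC'C ▸ Set.mem_image_of_mem _ hq
    simp at this

theorem image_inr_mem_parPB_boxes_iff {P Q : PB A} {C : Set Q.Ev} :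
    (Sum.inr : Q.Ev → (parPB P Q).Ev) '' C ∈ (parPB P Q).boxes ↔ C ∈ Q.boxes := by
  refine ⟨?_, fun hC => Or.inr ⟨C, hC, rfl⟩⟩
  rintro (⟨C', hC', hC'C⟩ | ⟨C', hC', hC'C⟩)
  · obtain ⟨p, hp⟩ := P.boxes_ne C' hC'
    have : Sum.inl p ∈ Sum.inr '' C := hC'C ▸ Set.mem_image_of_mem _ hp
    simp at this
  · rwa [← Sum.inr_injective.image_injective hC'C]

theorem range_inr_mem_parPB_boxes {P Q : PB A} (hQ : Set.univ ∈ Q.boxes) :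
    Set.range (Sum.inr : Q.Ev → (parPB P Q).Ev) ∈ (parPB P Q).boxes := by
  rw [← Set.image_univ]
  exact image_inr_mem_parPB_boxes_iff.2 hQ

theorem iso_restrictPB_parPB_range_inl (P Q : PB A) :
    Iso P (restrictPB (parPB P Q) (Set.range (Sum.inl : P.Ev → (parPB P Q).Ev))) :=
  iso_restrictPB_of_range_eq _ Sum.inl_injective (fun _ => rfl) (fun _ _ => Iff.rfl)
    (fun _ => image_inl_mem_parPB_boxes_iff) rfl

theorem iso_restrictPB_parPB_range_inr (P Q : PB A) :
    Iso Q (restrictPB (parPB P Q) (Set.range (Sum.inr : Q.Ev → (parPB P Q).Ev))) :=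
  iso_restrictPB_of_range_eq _ Sum.inr_injective (fun _ => rfl) (fun _ _ => Iff.rfl)
    (fun _ => image_inr_mem_parPB_boxes_iff) rfl

theorem iso_restrictPB_parPB_image_inl (P Q : PB A) (B : Set P.Ev) :
    Iso (restrictPB P B) (restrictPB (parPB P Q) ((Sum.inl : P.Ev → (parPB P Q).Ev) '' B)) := by
  refine iso_restrictPB_of_range_eq (X := restrictPB P B) _
    (Sum.inl_injective.comp Subtype.val_injective) (fun _ => rfl) (fun _ _ => Iff.rfl) (fun C => ?_)
    (Set.image_eq_range _ B).symm
  have hC : (Sum.inl : P.Ev → (parPB P Q).Ev) '' (Subtype.val '' C) =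
      (fun x : B => (Sum.inl x : (parPB P Q).Ev)) '' C :=
    Set.image_image Sum.inl Subtype.val C
  exact (congrArg (· ∈ (parPB P Q).boxes) hC).to_iff.symm.trans image_inl_mem_parPB_boxes_iff

theorem image_range_inl_eq_of_image_range_inr_eq {α β γ δ : Type*} {f : α ⊕ β → γ ⊕ δ}
    (hf : Function.Bijective f) (h : f '' Set.range Sum.inr = Set.range Sum.inr) :
    f '' Set.range Sum.inl = Set.range Sum.inl := by
  rw [← Set.compl_range_inr, Set.image_compl_eq hf, h, Set.compl_range_inr]

theorem subPoset_or_iso_of_iso_parPB {P Q P₁ P₂ : PB A} (h : Iso (parPB P Q) (parPB P₁ P₂))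
    (hQ : Set.univ ∈ Q.boxes) (hP₂ : Set.univ ∈ P₂.boxes) : SubPoset P₂ P ∨ Iso P P₁ := by
  obtain ⟨f, hord, hbox⟩ := h
  obtain ⟨D, hfD⟩ : ∃ D, f.toFun '' D = Set.range (Sum.inr : P₂.Ev → (parPB P₁ P₂).Ev) :=
    ⟨_, Set.image_preimage_eq _ f.bij.2⟩
  have hD := f.iso_restrictPB_image hord hbox D
  rw [hfD] at hD
  rcases hbox D (hfD ▸ range_inr_mem_parPB_boxes hP₂) with ⟨B, -, rfl⟩ | ⟨B, -, rfl⟩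
  · exact Or.inl ⟨B, ((iso_restrictPB_parPB_range_inr P₁ P₂).trans hD.symm).trans
      (iso_restrictPB_parPB_image_inl P Q B).symm⟩
  · have hsub : Set.range Sum.inr ⊆ f.toFun '' Set.range (Sum.inr : Q.Ev → (parPB P Q).Ev) :=
      hfD ▸ Set.image_mono (Set.image_subset_range _ _)
    have hinr : f.toFun '' Set.range (Sum.inr : Q.Ev → (parPB P Q).Ev) = Set.range Sum.inr := by
      rcases f.box_pres _ (range_inr_mem_parPB_boxes hQ) with ⟨C, -, hC⟩ | ⟨C, -, hC⟩
      · obtain ⟨y, -⟩ := P₂.boxes_ne _ hP₂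
        have : Sum.inr y ∈ Sum.inl '' C := hC ▸ hsub ⟨y, rfl⟩
        simp at this
      · exact (hC ▸ Set.image_subset_range _ _).antisymm hsub
    have hinl : f.toFun '' Set.range (Sum.inl : P.Ev → (parPB P Q).Ev) = Set.range Sum.inl :=
      image_range_inl_eq_of_image_range_inr_eq f.bij hinr
    have hP := f.iso_restrictPB_image hord hbox (Set.range Sum.inl)
    rw [hinl] at hP
    exact Or.inr (((iso_restrictPB_parPB_range_inl P Q).trans hP).trans
      (iso_restrictPB_parPB_range_inl P₁ P₂).symm)

theorem not_sat_onePB_of_not_sat_dia_boxF {P : PB A} {φ : Formula A}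
    (h : ¬ sat Iso (.dia (.boxF φ)) P) : ¬ sat Iso φ (onePB A) := by
  have hone : IsEmpty (onePB A).Ev := inferInstanceAs (IsEmpty PEmpty)
  intro hφ
  exact h ⟨P, onePB A, Iso.refl P, ⟨∅, Iso.of_isEmpty hone ⟨fun x => x.2⟩⟩,
    onePB A, Iso.of_isEmpty hone hone, hφ⟩

theorem univ_mem_boxes_of_sat_boxF {R : PB A} {φ : Formula A} (hφ : ¬ sat Iso φ (onePB A))
    (hR : sat Iso (.boxF φ) R) : Set.univ ∈ R.boxes := by
  obtain ⟨R', ⟨f, -, hbox⟩, hR'⟩ := hR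
  obtain ⟨r⟩ : Nonempty R'.Ev := by
    by_contra hempty
    exact hφ ((sat_iff_of_iso (Iso.of_isEmpty (not_nonempty_iff.1 hempty)
      (inferInstanceAs (IsEmpty PEmpty))) φ).1 hR')
  refine hbox _ ?_
  rw [Set.image_univ_of_surjective f.bij.2]
  exact Or.inr ⟨rfl, r, trivial⟩

end FrameRule

/-- Frame rule for parallel composition: if `P` is independent of `φ` and `Q`
satisfies `[φ]`, then `P ⊨ ψ` iff `P ∥ Q ⊨ ψ ∗ [φ]` (isomorphism semantics). -/
theorem frame_rule_par (A : Type) (P Q : PB A) (φ : Formula A)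
    (hind : ¬ sat Iso (Formula.dia (Formula.boxF φ)) P)
    (hQ : sat Iso (Formula.boxF φ) Q) :
    ∀ ψ : Formula A, sat Iso ψ P ↔ sat Iso (Formula.parF ψ (Formula.boxF φ)) (parPB P Q) := by
  intro ψ
  have hφ := not_sat_onePB_of_not_sat_dia_boxF hind
  refine ⟨fun hψ => ⟨P, Q, Iso.refl _, hψ, hQ⟩, ?_⟩
  rintro ⟨P₁, P₂, hiso, hψ, hP₂⟩
  rcases subPoset_or_iso_of_iso_parPB hiso (univ_mem_boxes_of_sat_boxF hφ hQ)
      (univ_mem_boxes_of_sat_boxF hφ hP₂) with hsub | hP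
  · exact absurd ⟨P, P₂, Iso.refl P, hsub, hP₂⟩ hind
  · exact (sat_iff_of_iso hP ψ).2 hψ
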